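/- Let ω = e^{2πi/11} and let ψ act ℂ-linearly on polynomials in x₀, ..., x₅ by x₀ ↦ x₀, x₁ ↦ ωx₁, x₂ ↦ ω³x₂, x₃ ↦ ω⁴x₃, x₄ ↦ ω⁵x₄, x₅ ↦ ω⁹x₅. Then a homogeneous polynomial f of degree 3 in ℂ[x₀,...,x₅] satisfies ψ(f) = f if and only if f lies in the ℂ-linear span of the six monomials x₀³, x₁²x₅, x₂²x₄, x₃²x₂, x₄²x₁, x₅²x₃. -/

import Mathlib

open MvPolynomial

/-- `ω = e^{2πi/11}`, a primitive 11-th root of unity. -/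
noncomputable def ω : ℂ := Complex.exp (2 * Real.pi * Complex.I / 11)

/-- The substitution automorphism
`ψ : x₀ ↦ x₀, x₁ ↦ ωx₁, x₂ ↦ ω³x₂, x₃ ↦ ω⁴x₃, x₄ ↦ ω⁵x₄, x₅ ↦ ω⁹x₅`
of `ℂ[x₀,…,x₅]`. -/
noncomputable def ψ : MvPolynomial (Fin 6) ℂ →ₐ[ℂ] MvPolynomial (Fin 6) ℂ :=
  aeval fun i : Fin 6 => C (ω ^ (![0, 1, 3, 4, 5, 9] i : ℕ)) * X i

/-!
`ψ` scales the monomial `x^d` by `ω ^ (∑ kᵢ dᵢ)`, so `ψ f = f` exactly when every monomial of `f`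
has weight `∑ kᵢ dᵢ` divisible by 11. A finite search through the 56 exponent vectors of degree 3
shows that the six monomials of the statement are the only cubic ones with this property.
-/

section DiagonalSubstitution

variable {σ R : Type*} [CommSemiring R]

theorem aeval_C_pow_mul_X_monomial (ζ : R) (k : σ → ℕ) (d : σ →₀ ℕ) (c : R) :
    aeval (fun i => C (ζ ^ k i) * X i) (monomial d c) =
      monomial d (ζ ^ Finsupp.weight k d * c) := by
  have hprod : (d.prod fun i e => (ζ ^ k i) ^ e) = ζ ^ Finsupp.weight k d := by
    simp only [← pow_mul, Finsupp.prod, Finset.prod_pow_eq_pow_sum, Finsupp.weight_apply,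
      Finsupp.sum, smul_eq_mul, mul_comm]
  rw [aeval_monomial, monomial_eq, algebraMap_eq]
  simp only [mul_pow, Finsupp.prod_mul, ← C_pow, ← map_finsuppProd, hprod, map_mul]
  ring

theorem coeff_aeval_C_pow_mul_X (ζ : R) (k : σ → ℕ) (d : σ →₀ ℕ) (f : MvPolynomial σ R) :
    coeff d (aeval (fun i => C (ζ ^ k i) * X i) f) = ζ ^ Finsupp.weight k d * coeff d f := by
  classical
  induction f using MvPolynomial.induction_on' with
  | monomial e c =>
    rw [aeval_C_pow_mul_X_monomial, coeff_monomial, coeff_monomial]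
    split_ifs with h
    · rw [h]
    · rw [mul_zero]
  | add p q hp hq => rw [map_add, coeff_add, coeff_add, hp, hq, mul_add]

theorem aeval_C_pow_mul_X_eq_self_iff [IsDomain R] {ζ : R} {n : ℕ} (hζ : IsPrimitiveRoot ζ n)
    (k : σ → ℕ) (f : MvPolynomial σ R) :
    aeval (fun i => C (ζ ^ k i) * X i) f = f ↔
      f ∈ restrictSupport R {d | n ∣ Finsupp.weight k d} := by
  simp only [MvPolynomial.ext_iff, coeff_aeval_C_pow_mul_X, mul_left_eq_self₀,
    ← hζ.pow_eq_one_iff_dvd, mem_restrictSupport_iff, Set.subset_def, Finset.mem_coe,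
    mem_support_iff, Set.mem_ofPred_eq, or_iff_not_imp_right]

end DiagonalSubstitution

theorem prod_X_pow_eq_monomial_equivFunOnFinite {σ R : Type*} [CommSemiring R] [Fintype σ]
    (v : σ → ℕ) :
    ∏ i, X i ^ v i = (monomial (Finsupp.equivFunOnFinite.symm v) 1 : MvPolynomial σ R) := by
  rw [monomial_eq, C_1, one_mul, Finsupp.prod_fintype _ _ fun _ => pow_zero _]
  rfl

theorem ω_isPrimitiveRoot : IsPrimitiveRoot ω 11 :=
  Complex.isPrimitiveRoot_exp 11 (by norm_num)

def invariantCubicExponents : Finset (Fin 6 → ℕ) :=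
  {![3, 0, 0, 0, 0, 0], ![0, 2, 0, 0, 0, 1], ![0, 0, 2, 0, 1, 0], ![0, 0, 1, 2, 0, 0],
    ![0, 1, 0, 0, 2, 0], ![0, 0, 0, 1, 0, 2]}

theorem dvd_weight_iff_mem_invariantCubicExponents (v : Fin 6 → ℕ) (hv : ∑ i, v i = 3) :
    11 ∣ ∑ i, v i * ![0, 1, 3, 4, 5, 9] i ↔ v ∈ invariantCubicExponents := by
  have hsearch : ∀ v ∈ Finset.Nat.antidiagonalTuple 6 3,
      11 ∣ ∑ i, v i * ![0, 1, 3, 4, 5, 9] i ↔ v ∈ invariantCubicExponents := by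
    decide
  exact hsearch v (Finset.Nat.mem_antidiagonalTuple.2 hv)

theorem dvd_weight_iff_mem_of_degree_eq_three (d : Fin 6 →₀ ℕ) (hd : d.degree = 3) :
    11 ∣ Finsupp.weight ![0, 1, 3, 4, 5, 9] d ↔
      d ∈ Finsupp.equivFunOnFinite.symm '' (invariantCubicExponents : Set (Fin 6 → ℕ)) := by
  rw [Finsupp.degree_eq_sum] at hd
  rw [Set.mem_image_equiv, Equiv.symm_symm, Finset.mem_coe, Finsupp.weight_apply,
    Finsupp.sum_fintype _ _ (by simp)]
  exact dvd_weight_iff_mem_invariantCubicExponents d hd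

theorem span_invariant_cubic_monomials :
    Submodule.span ℂ
        ({X 0 ^ 3, X 1 ^ 2 * X 5, X 2 ^ 2 * X 4, X 3 ^ 2 * X 2, X 4 ^ 2 * X 1, X 5 ^ 2 * X 3} :
          Set (MvPolynomial (Fin 6) ℂ)) =
      restrictSupport ℂ
        (Finsupp.equivFunOnFinite.symm '' (invariantCubicExponents : Set (Fin 6 → ℕ))) := by
  rw [restrictSupport_eq_span, Set.image_image]
  simp_rw [← prod_X_pow_eq_monomial_equivFunOnFinite]
  simp [invariantCubicExponents, Set.image_insert_eq, Fin.prod_univ_six, mul_comm]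

/-- A homogeneous polynomial `f` of degree 3 satisfies `ψ(f) = f` if and only
if `f` lies in the `ℂ`-linear span of the six monomials
`x₀³, x₁²x₅, x₂²x₄, x₃²x₂, x₄²x₁, x₅²x₃`. -/
theorem invariant_cubics (f : MvPolynomial (Fin 6) ℂ) (hf : f.IsHomogeneous 3) :
    ψ f = f ↔
      f ∈ Submodule.span ℂ
        ({X 0 ^ 3, X 1 ^ 2 * X 5, X 2 ^ 2 * X 4, X 3 ^ 2 * X 2,
          X 4 ^ 2 * X 1, X 5 ^ 2 * X 3} : Set (MvPolynomial (Fin 6) ℂ)) := by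
  have hdeg : ↑f.support ⊆ {d : Fin 6 →₀ ℕ | d.degree = 3} := by
    rw [← mem_homogeneousSubmodule, homogeneousSubmodule_eq_finsupp_supported] at hf
    exact hf
  rw [ψ, aeval_C_pow_mul_X_eq_self_iff ω_isPrimitiveRoot, span_invariant_cubic_monomials,
    mem_restrictSupport_iff, mem_restrictSupport_iff]
  exact ⟨fun h d hd => (dvd_weight_iff_mem_of_degree_eq_three d (hdeg hd)).1 (h hd),
    fun h d hd => (dvd_weight_iff_mem_of_degree_eq_three d (hdeg hd)).2 (h hd)⟩
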